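/- Let {G+k}_{k∈ℤ^n} be a tiling of ℝ^n by a compact tile G and let J ⊆ ℝ^n be a subspace. Then the minimal tile cylinder parallel to J is in fact invariant under all translations along L, the minimal rational subspace containing J. -/

import Mathlib

open MeasureTheory

/-- The real vector associated with an integer vector. -/
def intVec {n : ℕ} (k : Fin n → ℤ) : Fin n → ℝ := fun i => (k i : ℝ)

/-- The translate of a set by a vector. -/
def trSet {n : ℕ} (G : Set (Fin n → ℝ)) (v : Fin n → ℝ) : Set (Fin n → ℝ) :=
  (fun x => x + v) '' G

/-- `G` is a tile: a compact set of measure one whose integer translates cover `ℝⁿ`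
with pairwise overlaps of measure zero. -/
def IsTile {n : ℕ} (G : Set (Fin n → ℝ)) : Prop :=
  IsCompact G ∧ volume G = 1 ∧ (⋃ k : Fin n → ℤ, trSet G (intVec k)) = Set.univ ∧
    ∀ k : Fin n → ℤ, k ≠ 0 → volume (G ∩ trSet G (intVec k)) = 0

/-- A cylinder parallel to a subspace `J`: a closed nonempty set invariant under all
translations along `J`. -/
def IsCylinder {n : ℕ} (J : Submodule ℝ (Fin n → ℝ)) (C : Set (Fin n → ℝ)) : Prop :=
  IsClosed C ∧ C.Nonempty ∧ ∀ h ∈ J, (fun x => x + h) '' C = C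

/-- A tile cylinder: a cylinder which is a union of tiles of the tiling. -/
def IsTileCylinder {n : ℕ} (G : Set (Fin n → ℝ)) (J : Submodule ℝ (Fin n → ℝ))
    (C : Set (Fin n → ℝ)) : Prop :=
  IsCylinder J C ∧ ∃ E : Set (Fin n → ℤ), C = ⋃ k ∈ E, trSet G (intVec k)

/-- A minimal (by inclusion) tile cylinder parallel to `J`. -/
def IsMinTileCylinder {n : ℕ} (G : Set (Fin n → ℝ)) (J : Submodule ℝ (Fin n → ℝ))
    (C : Set (Fin n → ℝ)) : Prop :=
  IsTileCylinder G J C ∧ ∀ C', IsTileCylinder G J C' → C' ⊆ C → C' = C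

/-- A subspace of `ℝⁿ` is rational if it is spanned by finitely many integer vectors. -/
def IsRationalSubspace {n : ℕ} (L : Submodule ℝ (Fin n → ℝ)) : Prop :=
  ∃ T : Finset (Fin n → ℤ), L = Submodule.span ℝ (intVec '' ↑T)


/-!
The stabilizer `S` of `C` is a closed subgroup of `ℝⁿ` containing `J`. Small translates of the
compact tile overlap it in positive measure, and `C` is a union of tiles, so an integer vector
lying within a fixed distance of `S` already belongs to `S`. A closed subgroup contains, near `0`,
only vectors whose whole real line it contains; with simultaneous Dirichlet approximation
`p • v ≈ k` this shows that the largest subspace `V ⊆ S` is spanned by integer vectors, i.e. is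
rational. Minimality of `L` then gives `L ≤ V ⊆ S`.
-/

open Set Filter Topology
open scoped Pointwise

theorem abs_floor_div_mul_sub_le (r : ℝ) {y : ℝ} (hy : 0 < y) : |⌊r / y⌋ * y - r| ≤ y := by
  have h₁ := mul_le_mul_of_nonneg_right (Int.sub_one_lt_floor (r / y)).le hy.le
  have h₂ := mul_le_mul_of_nonneg_right (Int.floor_le (r / y)) hy.le
  rw [sub_mul, one_mul, div_mul_cancel₀ _ hy.ne'] at h₁
  rw [div_mul_cancel₀ _ hy.ne'] at h₂
  rw [abs_le]
  constructor <;> linarith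

section ClosedSubgroup

variable {E : Type*} [NormedAddCommGroup E] [NormedSpace ℝ E]

def AddSubgroup.linealSpace (H : AddSubgroup E) : Submodule ℝ E where
  carrier := {x | ∀ r : ℝ, r • x ∈ H}
  add_mem' hx hy r := by rw [smul_add]; exact H.add_mem (hx r) (hy r)
  zero_mem' r := by rw [smul_zero]; exact H.zero_mem
  smul_mem' c x hx r := by rw [smul_smul]; exact hx (r * c)

namespace AddSubgroup

variable {H : AddSubgroup E}

theorem linealSpace_subset : (H.linealSpace : Set E) ⊆ H := fun x hx => by
  simpa using hx 1

/-- The multiples `⌊r / ‖w i‖⌋ • w i ∈ H` converge to `r • a`. -/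
theorem mem_linealSpace_of_tendsto (hH : IsClosed (H : Set E)) {w : ℕ → E} {a : E}
    (hwH : ∀ i, w i ∈ H) (hw0 : ∀ i, w i ≠ 0) (hw : Tendsto w atTop (𝓝 0))
    (hdir : Tendsto (fun i => ‖w i‖⁻¹ • w i) atTop (𝓝 a)) : a ∈ H.linealSpace := by
  intro r
  set c : ℕ → ℝ := fun i => ⌊r / ‖w i‖⌋ * ‖w i‖
  have hc : Tendsto c atTop (𝓝 r) := tendsto_iff_norm_sub_tendsto_zero.2 <|
    squeeze_zero (fun _ => norm_nonneg _)
      (fun i => abs_floor_div_mul_sub_le r (norm_pos_iff.2 (hw0 i)))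
      (tendsto_zero_iff_norm_tendsto_zero.1 hw)
  have hcH : ∀ i, c i • (‖w i‖⁻¹ • w i) ∈ H := fun i => by
    rw [smul_smul, mul_assoc, mul_inv_cancel₀ (norm_ne_zero_iff.2 (hw0 i)), mul_one,
      Int.cast_smul_eq_zsmul]
    exact H.zsmul_mem (hwH i) _
  exact hH.mem_of_tendsto (hc.smul hdir) (Eventually.of_forall hcH)

/-- Small elements of `H` are normalised and pushed into a complement `W` of the lineal space;
a limit direction would span a line in `H`, hence lie in both. -/
theorem exists_forall_norm_lt_mem_linealSpace [FiniteDimensional ℝ E]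
    (hH : IsClosed (H : Set E)) : ∃ ε > 0, ∀ h ∈ H, ‖h‖ < ε → h ∈ H.linealSpace := by
  obtain ⟨W, hVW⟩ := H.linealSpace.exists_isCompl
  set P := W.projection H.linealSpace hVW.symm
  by_contra! hsmall
  choose h hhH hnorm hhV using fun i : ℕ => hsmall (1 / (i + 1)) (by positivity)
  have hwH : ∀ i, P (h i) ∈ H := fun i => by
    simpa using H.sub_mem (hhH i) (linealSpace_subset (W.sub_projection_mem hVW.symm (h i)))
  have hw0 : ∀ i, P (h i) ≠ 0 := fun i =>
    (Submodule.projection_apply_eq_zero_iff _).not.2 (hhV i)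
  have hh : Tendsto h atTop (𝓝 0) :=
    squeeze_zero_norm (fun i => (hnorm i).le) tendsto_one_div_add_atTop_nhds_zero_nat
  have hw : Tendsto (P ∘ h) atTop (𝓝 0) := by
    simpa using ((LinearMap.continuous_of_finiteDimensional P).tendsto 0).comp hh
  obtain ⟨a, ha, φ, hφ, hlim⟩ := (isCompact_sphere (0 : E) 1).tendsto_subseq
    (x := fun i => ‖P (h i)‖⁻¹ • P (h i)) fun i => by
      simp [norm_smul, norm_ne_zero_iff.2 (hw0 i)]
  have haW : a ∈ W := W.closed_of_finiteDimensional.mem_of_tendsto hlim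
    (Eventually.of_forall fun i => W.smul_mem _ (W.projection_apply_mem _ _))
  have haV : a ∈ H.linealSpace := mem_linealSpace_of_tendsto hH (fun i => hwH _)
    (fun i => hw0 _) (hw.comp hφ.tendsto_atTop) hlim
  have : a = 0 := (Submodule.disjoint_def.1 hVW.disjoint) a haV haW
  simp [this] at ha

end AddSubgroup

end ClosedSubgroup

theorem isClosed_stabilizer {G X : Type*} [AddGroup G] [TopologicalSpace G]
    [ContinuousNeg G] [TopologicalSpace X] [AddAction G X] [ContinuousVAdd G X] {C : Set X}
    (hC : IsClosed C) : IsClosed (AddAction.stabilizer G C : Set G) := by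
  have hsub : IsClosed {g : G | g +ᵥ C ⊆ C} := by
    simp_rw [vadd_set_subset_iff, ofPred_forall]
    exact isClosed_biInter fun c _ => hC.preimage (continuous_id.vadd continuous_const)
  have : (AddAction.stabilizer G C : Set G) =
      {g : G | g +ᵥ C ⊆ C} ∩ Neg.neg ⁻¹' {g | g +ᵥ C ⊆ C} := by
    ext g
    simp [AddAction.mem_stabilizer_iff, subset_antisymm_iff, subset_vadd_set_iff]
  rw [this]
  exact hsub.inter (hsub.preimage continuous_neg)

theorem MeasureTheory.eventually_nhds_zero_measure_vadd_inter_ne_zero {G : Type*} [AddGroup G]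
    [TopologicalSpace G] [IsTopologicalAddGroup G] [LocallyCompactSpace G] [MeasurableSpace G]
    [BorelSpace G] {μ : Measure G} [IsFiniteMeasureOnCompacts μ] [μ.InnerRegularCompactLTTop]
    [μ.IsAddLeftInvariant] {K : Set G} (hK : IsCompact K) (h'K : IsClosed K) (hμK : μ K ≠ 0) :
    ∀ᶠ g in 𝓝 (0 : G), μ ((g +ᵥ K) ∩ K) ≠ 0 := by
  filter_upwards [eventually_nhds_zero_measure_vadd_sdiff_lt (μ := μ) hK h'K hμK] with g hg h0
  have := measure_le_inter_add_sdiff μ (g +ᵥ K) K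
  rw [measure_vadd, h0, zero_add] at this
  exact (this.trans_lt hg).false

theorem image_add_right_eq_vadd {α : Type*} [AddCommMagma α] (A : Set α) (v : α) :
    (fun x => x + v) '' A = v +ᵥ A := by
  simp_rw [add_comm _ v]
  rfl

variable {n : ℕ}

theorem intVec_injective : Function.Injective (intVec (n := n)) := fun a b h =>
  funext fun i => by simpa [intVec] using congrFun h i

theorem intVec_add (a b : Fin n → ℤ) : intVec (a + b) = intVec a + intVec b := by
  funext i; simp [intVec]

theorem intVec_neg (a : Fin n → ℤ) : intVec (-a) = -intVec a := by
  funext i; simp [intVec]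

theorem exists_nat_norm_smul_sub_intVec_lt (v : Fin n → ℝ) {δ : ℝ} (hδ : 0 < δ) :
    ∃ p : ℕ, 0 < p ∧ ∃ k : Fin n → ℤ, ‖(p : ℝ) • v - intVec k‖ < δ := by
  set f : ℕ → Fin n → ℝ := fun m i => Int.fract (m * v i)
  have hf : ∀ m, f m ∈ Metric.closedBall (0 : Fin n → ℝ) 1 := fun m => by
    simp only [f, mem_closedBall_zero_iff, pi_norm_le_iff_of_nonneg zero_le_one, Real.norm_eq_abs]
    exact fun i => abs_le.2 ⟨by linarith [Int.fract_nonneg (m * v i)], (Int.fract_lt_one _).le⟩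
  obtain ⟨a, -, φ, hφ, hlim⟩ := tendsto_subseq_of_bounded Metric.isBounded_closedBall hf
  obtain ⟨N, hN⟩ := Metric.cauchySeq_iff'.1 hlim.cauchySeq δ hδ
  refine ⟨φ (N + 1) - φ N, Nat.sub_pos_of_lt (hφ N.lt_succ_self),
    fun i => ⌊φ (N + 1) * v i⌋ - ⌊φ N * v i⌋, ?_⟩
  convert hN (N + 1) N.le_succ using 1
  rw [dist_eq_norm]
  congr 1
  ext i
  simp only [f, intVec, Function.comp_apply, Pi.sub_apply, Pi.smul_apply, smul_eq_mul, Int.fract,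
    Nat.cast_sub (hφ N.lt_succ_self).le, Int.cast_sub]
  ring

theorem isRationalSubspace_span_intVec (s : Set (Fin n → ℤ)) :
    IsRationalSubspace (Submodule.span ℝ (intVec '' s)) := by
  obtain ⟨b, hbs, hspan, hli⟩ := exists_linearIndependent ℝ (intVec '' s)
  have hfin : (intVec ⁻¹' b).Finite := hli.setFinite.preimage intVec_injective.injOn
  refine ⟨hfin.toFinset, ?_⟩
  rw [hfin.coe_toFinset, image_preimage_eq_of_subset (hbs.trans (image_subset_range _ _)), hspan]

/-- Each `v ∈ V` is the limit of the vectors `p⁻¹ • k`, where `p • v` is close to the integer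
vector `k`, which then lies in `V`. -/
theorem isRationalSubspace_of_forall_norm_sub_intVec_lt (V : Submodule ℝ (Fin n → ℝ))
    {ε : ℝ} (hε : 0 < ε) (hnear : ∀ t ∈ V, ∀ k, ‖t - intVec k‖ < ε → intVec k ∈ V) :
    IsRationalSubspace V := by
  set W := Submodule.span ℝ (intVec '' {k | intVec k ∈ V})
  suffices V = W from this ▸ isRationalSubspace_span_intVec _
  refine le_antisymm (fun v hv => ?_) (Submodule.span_le.2 (by rintro _ ⟨k, hk, rfl⟩; exact hk))
  rw [← SetLike.mem_coe, ← W.closed_of_finiteDimensional.closure_eq, Metric.mem_closure_iff]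
  intro δ hδ
  obtain ⟨p, hp, k, hk⟩ := exists_nat_norm_smul_sub_intVec_lt v (lt_min hδ hε)
  have hkW : intVec k ∈ W :=
    Submodule.subset_span ⟨k, hnear _ (V.smul_mem _ hv) k (hk.trans_le (min_le_right _ _)), rfl⟩
  have hp' : (1 : ℝ) ≤ p := by exact_mod_cast hp
  refine ⟨(p : ℝ)⁻¹ • intVec k, W.smul_mem _ hkW, ?_⟩
  calc dist v ((p : ℝ)⁻¹ • intVec k) = ‖(p : ℝ)⁻¹ • ((p : ℝ) • v - intVec k)‖ := by
        rw [dist_eq_norm, smul_sub, inv_smul_smul₀ (by positivity)]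
    _ = (p : ℝ)⁻¹ * ‖(p : ℝ) • v - intVec k‖ := by
        rw [norm_smul, Real.norm_of_nonneg (by positivity)]
    _ ≤ ‖(p : ℝ) • v - intVec k‖ :=
        mul_le_of_le_one_left (norm_nonneg _) (inv_le_one_of_one_le₀ hp')
    _ < δ := hk.trans_le (min_le_left _ _)

theorem trSet_eq_vadd (G : Set (Fin n → ℝ)) (v : Fin n → ℝ) : trSet G v = v +ᵥ G :=
  image_add_right_eq_vadd G v

namespace IsTile

variable {G : Set (Fin n → ℝ)}

theorem measure_vadd_inter_vadd_eq_zero (hG : IsTile G) {a b : Fin n → ℤ} (hab : a ≠ b) :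
    volume ((intVec a +ᵥ G) ∩ (intVec b +ᵥ G)) = 0 := by
  have := hG.2.2.2 (b - a) (sub_ne_zero.2 hab.symm)
  rwa [trSet_eq_vadd, ← measure_vadd volume (intVec a), vadd_set_inter, vadd_vadd, ← intVec_add,
    add_sub_cancel] at this

theorem mem_of_measure_inter_ne_zero (hG : IsTile G) {E : Set (Fin n → ℤ)} {m : Fin n → ℤ}
    (hm : volume ((intVec m +ᵥ G) ∩ ⋃ k ∈ E, intVec k +ᵥ G) ≠ 0) : m ∈ E := by
  by_contra hmE
  rw [inter_iUnion₂] at hm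
  exact hm ((measure_biUnion_null_iff E.to_countable).2 fun k hk =>
    hG.measure_vadd_inter_vadd_eq_zero (ne_of_mem_of_not_mem hk hmE).symm)

theorem exists_pos_forall_measure_vadd_inter_ne_zero (hG : IsTile G) :
    ∃ ε > 0, ∀ s : Fin n → ℝ, ‖s‖ < ε → volume ((s +ᵥ G) ∩ G) ≠ 0 := by
  have := eventually_nhds_zero_measure_vadd_inter_ne_zero (μ := volume) hG.1 hG.1.isClosed
    (by rw [hG.2.1]; exact one_ne_zero)
  simpa using Metric.eventually_nhds_iff.1 this

/-- For `m ∈ E`, the tile at `m + k` overlaps the tile at `m` moved by `t`, which lies in `C`. -/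
theorem intVec_vadd_subset_of_norm_sub_lt (hG : IsTile G) {E : Set (Fin n → ℤ)}
    {C : Set (Fin n → ℝ)} (hE : C = ⋃ k ∈ E, intVec k +ᵥ G) {ε : ℝ}
    (hε : ∀ s : Fin n → ℝ, ‖s‖ < ε → volume ((s +ᵥ G) ∩ G) ≠ 0) {t : Fin n → ℝ}
    (ht : t +ᵥ C = C) {k : Fin n → ℤ} (hk : ‖t - intVec k‖ < ε) : intVec k +ᵥ C ⊆ C := by
  suffices ∀ m ∈ E, m + k ∈ E by
    conv_lhs => rw [hE]
    rw [vadd_set_iUnion₂]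
    refine iUnion₂_subset fun m hm => ?_
    rw [vadd_vadd, ← intVec_add, add_comm, hE]
    exact subset_biUnion_of_mem (u := fun k => intVec k +ᵥ G) (this m hm)
  intro m hm
  refine hG.mem_of_measure_inter_ne_zero fun h0 => hε (intVec k - t) (by rwa [norm_sub_rev]) ?_
  have hsub : t +ᵥ (intVec m +ᵥ G) ⊆ C :=
    ht ▸ vadd_set_mono (hE ▸ subset_biUnion_of_mem (u := fun k => intVec k +ᵥ G) hm)
  calc volume (((intVec k - t) +ᵥ G) ∩ G)
      = volume ((intVec (m + k) +ᵥ G) ∩ (t +ᵥ (intVec m +ᵥ G))) := by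
        rw [← measure_vadd volume (t + intVec m), vadd_set_inter, vadd_vadd, vadd_vadd,
          intVec_add]
        congr 3; abel
    _ = 0 := measure_mono_null (inter_subset_inter_right _ hsub) (hE ▸ h0)

theorem exists_pos_forall_norm_sub_lt_intVec_mem_stabilizer (hG : IsTile G) {E : Set (Fin n → ℤ)}
    {C : Set (Fin n → ℝ)} (hE : C = ⋃ k ∈ E, trSet G (intVec k)) :
    ∃ ε > 0, ∀ t ∈ AddAction.stabilizer (Fin n → ℝ) C, ∀ k, ‖t - intVec k‖ < ε →
      intVec k ∈ AddAction.stabilizer (Fin n → ℝ) C := by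
  simp only [trSet_eq_vadd] at hE
  obtain ⟨ε, hεpos, hε⟩ := hG.exists_pos_forall_measure_vadd_inter_ne_zero
  refine ⟨ε, hεpos, fun t ht k hk => ?_⟩
  have ht' := (AddAction.stabilizer (Fin n → ℝ) C).neg_mem ht
  rw [AddAction.mem_stabilizer_iff] at ht ht' ⊢
  have hk' : ‖-t - intVec (-k)‖ < ε := by rwa [intVec_neg, neg_sub_neg, norm_sub_rev]
  refine (hG.intVec_vadd_subset_of_norm_sub_lt hE hε ht hk).antisymm (subset_vadd_set_iff.2 ?_)
  simpa [intVec_neg] using hG.intVec_vadd_subset_of_norm_sub_lt hE hε ht' hk'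

end IsTile

theorem stmt10_general {n : ℕ} (G : Set (Fin n → ℝ)) (hG : IsTile G)
    (J L : Submodule ℝ (Fin n → ℝ))
    (hLmin : ∀ L' : Submodule ℝ (Fin n → ℝ), IsRationalSubspace L' → J ≤ L' → L ≤ L')
    (C : Set (Fin n → ℝ)) (hC : IsMinTileCylinder G J C) :
    ∀ h ∈ L, (fun x => x + h) '' C = C := by
  obtain ⟨⟨⟨hCcl, -, hJC⟩, E, hE⟩, -⟩ := hC
  set S := AddAction.stabilizer (Fin n → ℝ) C
  have hJS : J ≤ S.linealSpace := fun t ht r => by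
    rw [AddAction.mem_stabilizer_iff, ← image_add_right_eq_vadd]
    exact hJC _ (J.smul_mem r ht)
  obtain ⟨ε, hε, hnear⟩ := hG.exists_pos_forall_norm_sub_lt_intVec_mem_stabilizer hE
  obtain ⟨ε₀, hε₀, hsmall⟩ := S.exists_forall_norm_lt_mem_linealSpace (isClosed_stabilizer hCcl)
  have hrat : IsRationalSubspace S.linealSpace := by
    refine isRationalSubspace_of_forall_norm_sub_intVec_lt _ (lt_min hε hε₀) fun t ht k hk => ?_
    have hkS := hnear t (S.linealSpace_subset ht) k (hk.trans_le (min_le_left _ _))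
    have hkt : intVec k - t ∈ S.linealSpace :=
      hsmall _ (S.sub_mem hkS (S.linealSpace_subset ht))
        (by rw [norm_sub_rev]; exact hk.trans_le (min_le_right _ _))
    simpa using S.linealSpace.add_mem hkt ht
  intro h hh
  rw [image_add_right_eq_vadd, ← AddAction.mem_stabilizer_iff]
  exact S.linealSpace_subset (hLmin _ hrat hJS hh)

/-- a minimal tile cylinder parallel to `J` is invariant under all
translations along the minimal rational subspace `L` containing `J`. -/
theorem stmt10 {n : ℕ} (G : Set (Fin n → ℝ)) (hG : IsTile G)
    (J L : Submodule ℝ (Fin n → ℝ))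
    (hLrat : IsRationalSubspace L) (hJL : J ≤ L)
    (hLmin : ∀ L' : Submodule ℝ (Fin n → ℝ), IsRationalSubspace L' → J ≤ L' → L ≤ L')
    (C : Set (Fin n → ℝ)) (hC : IsMinTileCylinder G J C) :
    ∀ h ∈ L, (fun x => x + h) '' C = C :=
  stmt10_general G hG J L hLmin C hC
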